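/- arXiv:2204.03095 — 5 statements merged into one kernel-verified Lean document; each statement's English description precedes it below -/
import Mathlib

section
/- Let A be the free associative algebra over ℂ generated by noncommuting variables u_n, n ∈ ℤ, and let ∂ be the derivation determined by ∂(u_n) = u_{n+1}u_n − u_n u_{n−1} (the nonabelian Volterra flow). Let I be the two-sided ideal generated by the elements f_{i,j} = u_i u_j − ω_{i,j} u_j u_i for i < j, where ω_{i,j} ∈ ℂ* and ω_{j,i} = ω_{i,j}^{-1}. Then ∂(I) ⊆ I if and only if ω_{n,n+1} = ω_{0,1} for all n ∈ ℤ and ω_{n,m} = 1 whenever m − n ≥ 2. -/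
/-!
Write `qcomm c x y = x y - c • y x`. Then `I` is spanned by the `qcomm (ω i j) u_i u_j`, and
`D (qcomm c u_i u_j) = qcomm c (D u_i) u_j + qcomm c u_i (D u_j)` is a sum of eight cubic monomials.

If the weights are as stated, these monomials cancel in pairs in `A ⧸ I`, where a product is moved
past a generator by `qcomm (p * q) (x * y) z = x * qcomm q y z + q • (qcomm p x z * y)` and its
mirror image. So `D` maps the generators of `I`, and hence all of `I`, into `I`.

Conversely, the linear form sending a word to the product of the `ω a b` over the pairs `a < b`
occurring in this order in it vanishes on `I`, since swapping adjacent letters `a < b` multiplies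
its value by `ω a b`; restricting it to words of a fixed letter sum separates the cubic monomials.
Evaluated on `D (qcomm (ω i j) u_i u_j)` for `(i, j) = (n, n+1), (n, n+2), (n, m)` it gives
`ω n (n+2) = 1`, `ω (n+1) (n+2) = ω n (n+1)` and `ω n (m+1) = 1` for `m ≥ n + 2`.
-/

open scoped Classical

noncomputable section

/-- The free associative algebra `A = ℂ⟨u_n : n ∈ ℤ⟩`. -/
abbrev VolA : Type := FreeAlgebra ℂ ℤ

/-- The generators `u_n`. -/
def uu (n : ℤ) : VolA := FreeAlgebra.ι ℂ n

section QComm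

variable {R A : Type*} [CommRing R] [Ring A] [Algebra R A]

def qcomm (c : R) (x y : A) : A := x * y - c • (y * x)

lemma qcomm_sub_left (c : R) (x y z : A) : qcomm c (x - y) z = qcomm c x z - qcomm c y z := by
  simp only [qcomm, sub_mul, mul_sub, smul_sub]
  abel

lemma qcomm_sub_right (c : R) (x y z : A) : qcomm c x (y - z) = qcomm c x y - qcomm c x z := by
  simp only [qcomm, sub_mul, mul_sub, smul_sub]
  abel

lemma qcomm_one_self (x : A) : qcomm (1 : R) x x = 0 := by
  rw [qcomm, one_smul, sub_self]

lemma qcomm_eq_qcomm_add (c d : R) (x y : A) :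
    qcomm c x y = qcomm d x y + (d - c) • (y * x) := by
  simp only [qcomm, sub_smul]
  abel

lemma qcomm_mul_left (p q : R) (x y z : A) :
    qcomm (p * q) (x * y) z = x * qcomm q y z + q • (qcomm p x z * y) := by
  simp only [qcomm, mul_sub, sub_mul, smul_sub, mul_smul_comm, smul_mul_assoc, smul_smul,
    mul_assoc, mul_comm q p]
  abel

lemma qcomm_mul_right (p q : R) (x y z : A) :
    qcomm (p * q) x (y * z) = qcomm p x y * z + p • (y * qcomm q x z) := by
  simp only [qcomm, mul_sub, sub_mul, smul_sub, mul_smul_comm, smul_mul_assoc, smul_smul,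
    mul_assoc]
  abel

lemma qcomm_mul_left_eq_zero {p q : R} {x y z : A} (hxz : qcomm p x z = 0)
    (hyz : qcomm q y z = 0) : qcomm (p * q) (x * y) z = 0 := by
  rw [qcomm_mul_left, hxz, hyz, zero_mul, mul_zero, smul_zero, add_zero]

lemma qcomm_mul_right_eq_zero {p q : R} {x y z : A} (hxy : qcomm p x y = 0)
    (hxz : qcomm q x z = 0) : qcomm (p * q) x (y * z) = 0 := by
  rw [qcomm_mul_right, hxy, hxz, zero_mul, mul_zero, smul_zero, add_zero]

lemma AlgHom.map_qcomm {B : Type*} [Ring B] [Algebra R B] (f : A →ₐ[R] B) (c : R) (x y : A) :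
    f (qcomm c x y) = qcomm c (f x) (f y) := by
  simp only [qcomm, map_sub, map_mul, map_smul]

lemma LinearMap.map_qcomm_of_leibniz (D : A →ₗ[R] A)
    (hD : ∀ a b, D (a * b) = D a * b + a * D b) (c : R) (x y : A) :
    D (qcomm c x y) = qcomm c (D x) y + qcomm c x (D y) := by
  simp only [qcomm, map_sub, map_smul, hD, smul_add]
  abel

end QComm

namespace TwoSidedIdeal

variable {R : Type*} [Ring R]

lemma map_eq_zero_of_mem_span {M : Type*} [AddCommGroup M] (f : R →+ M) {s : Set R}
    (hs : ∀ x ∈ s, ∀ p q, f (p * x * q) = 0) {x : R} (hx : x ∈ span s) : f x = 0 := by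
  suffices ∀ p q, f (p * x * q) = 0 by simpa using this 1 1
  induction hx using span_induction with
  | mem x hx => exact hs x hx
  | zero => simp
  | add x y _ _ hx hy => intro p q; rw [mul_add, add_mul, map_add, hx, hy, add_zero]
  | neg x _ hx => intro p q; rw [mul_neg, neg_mul, map_neg, hx, neg_zero]
  | left_absorb a x _ hx => intro p q; simpa only [mul_assoc] using hx (p * a) q
  | right_absorb b x _ hx => intro p q; simpa only [mul_assoc] using hx p (b * q)

lemma map_mem_span_of_leibniz (D : R →+ R) (hD : ∀ a b, D (a * b) = D a * b + a * D b)
    {s : Set R} (hs : ∀ x ∈ s, D x ∈ span s) {x : R} (hx : x ∈ span s) : D x ∈ span s := by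
  induction hx using span_induction with
  | mem x hx => exact hs x hx
  | zero => rw [map_zero]; exact zero_mem _
  | add x y _ _ hx hy => rw [map_add]; exact add_mem _ hx hy
  | neg x _ hx => rw [map_neg]; exact neg_mem _ hx
  | left_absorb a x hx hDx =>
    rw [hD]; exact add_mem _ (mul_mem_left _ _ _ hx) (mul_mem_left _ _ _ hDx)
  | right_absorb b x hx hDx =>
    rw [hD]; exact add_mem _ (mul_mem_right _ _ _ hDx) (mul_mem_right _ _ _ hx)

lemma ringCon_mkₐ_eq_zero_iff {S A : Type*} [CommSemiring S] [Ring A] [Algebra S A]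
    (I : TwoSidedIdeal A) {x : A} : I.ringCon.mkₐ S x = 0 ↔ x ∈ I := by
  rw [RingCon.mkₐ_apply, ← RingCon.coe_zero, RingCon.eq, ← mem_iff]

end TwoSidedIdeal

lemma MonoidAlgebra.linearCombination_mul_sub_mul {R G : Type*} [CommRing R] [Monoid G]
    (ψ : G → R) {m₁ m₂ : G} {c : R} (h : ∀ x y, ψ (x * m₁ * y) = c * ψ (x * m₂ * y))
    (p q : MonoidAlgebra R G) :
    Finsupp.linearCombination R ψ
      (coeffLinearEquiv R (p * (single m₁ 1 - single m₂ c) * q)) = 0 := by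
  induction p using induction_linear with
  | zero => simp
  | add f g hf hg => rw [add_mul, add_mul, map_add, map_add, hf, hg, add_zero]
  | single x r =>
    induction q using induction_linear with
    | zero => simp
    | add f g hf hg => rw [mul_add, map_add, map_add, hf, hg, add_zero]
    | single y s =>
      simp only [mul_sub, sub_mul, single_mul_single, map_sub, coeffLinearEquiv_apply,
        coeff_single, Finsupp.linearCombination_single, smul_eq_mul, h]
      ring

lemma FreeAlgebra.equivMonoidAlgebraFreeMonoid_ι {R X : Type*} [CommSemiring R] (x : X) :
    equivMonoidAlgebraFreeMonoid (ι R x) = MonoidAlgebra.single (FreeMonoid.of x) 1 := by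
  simp only [equivMonoidAlgebraFreeMonoid, MonoidAlgebra.of_apply, AlgEquiv.ofAlgHom_apply,
    lift_ι_apply]

section Quantisation

open FreeAlgebra

variable {R α : Type*} [CommRing R] [LinearOrder α]

def quantisationIdeal (ω : α → α → R) : TwoSidedIdeal (FreeAlgebra R α) :=
  TwoSidedIdeal.span {x | ∃ a b, a < b ∧ x = qcomm (ω a b) (ι R a) (ι R b)}

def inversionWeight (ω : α → α → R) : List α → R
  | [] => 1
  | a :: l => (l.map fun b => if a < b then ω a b else 1).prod * inversionWeight ω l

lemma inversionWeight_append_swap (ω : α → α → R) {a b : α} (hab : a < b) (x y : List α) :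
    inversionWeight ω (x ++ a :: b :: y) = ω a b * inversionWeight ω (x ++ b :: a :: y) := by
  induction x with
  | nil =>
    simp only [List.nil_append, inversionWeight, List.map_cons, List.prod_cons, if_pos hab,
      if_neg hab.not_gt]
    ring
  | cons z x ih =>
    have hperm : (x ++ a :: b :: y).Perm (x ++ b :: a :: y) := .append_left x (.swap b a y)
    simp only [List.cons_append, inversionWeight, ih, (hperm.map _).prod_eq]
    ring

variable [AddCommMonoid α]

def inversionFunctional (ω : α → α → R) (s : α) : FreeAlgebra R α →ₗ[R] R :=
  Finsupp.linearCombination R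
      (fun w : FreeMonoid α => if w.toList.sum = s then inversionWeight ω w.toList else 0) ∘ₗ
    (MonoidAlgebra.coeffLinearEquiv R).toLinearMap ∘ₗ equivMonoidAlgebraFreeMonoid.toLinearMap

lemma inversionFunctional_mul_qcomm_mul (ω : α → α → R) (s : α) {a b : α} (hab : a < b)
    (p q : FreeAlgebra R α) :
    inversionFunctional ω s (p * qcomm (ω a b) (ι R a) (ι R b) * q) = 0 := by
  simp only [inversionFunctional, qcomm, LinearMap.comp_apply, AlgEquiv.toLinearMap_apply,
    map_mul, map_sub, map_smul, equivMonoidAlgebraFreeMonoid_ι, MonoidAlgebra.single_mul_single,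
    MonoidAlgebra.smul_single, smul_eq_mul, mul_one, LinearEquiv.coe_coe]
  refine MonoidAlgebra.linearCombination_mul_sub_mul _ (fun x y => ?_) _ _
  simp only [FreeMonoid.toList_mul, FreeMonoid.toList_of, List.append_assoc, List.cons_append,
    List.nil_append, inversionWeight_append_swap ω hab, List.sum_append, List.sum_cons,
    add_left_comm a b, mul_ite, mul_zero]

lemma inversionFunctional_eq_zero_of_mem_quantisationIdeal (ω : α → α → R) (s : α)
    {x : FreeAlgebra R α} (hx : x ∈ quantisationIdeal ω) : inversionFunctional ω s x = 0 := by
  refine TwoSidedIdeal.map_eq_zero_of_mem_span (inversionFunctional ω s).toAddMonoidHom ?_ hx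
  rintro _ ⟨a, b, hab, rfl⟩ p q
  exact inversionFunctional_mul_qcomm_mul ω s hab p q

lemma inversionFunctional_ι_mul_ι_mul_ι (ω : α → α → R) (s a b c : α) :
    inversionFunctional ω s (ι R a * ι R b * ι R c) =
      if a + b + c = s then inversionWeight ω [a, b, c] else 0 := by
  simp [inversionFunctional, equivMonoidAlgebraFreeMonoid_ι, MonoidAlgebra.single_mul_single,
    add_assoc]

end Quantisation

section Volterra

open FreeAlgebra

variable {R : Type*} [CommRing R]

def volterraField {B : Type*} [Ring B] (v : ℤ → B) (n : ℤ) : B :=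
  v (n + 1) * v n - v n * v (n - 1)

lemma AlgHom.map_volterraField {A B : Type*} [Ring A] [Algebra R A] [Ring B] [Algebra R B]
    (f : A →ₐ[R] B) (v : ℤ → A) (n : ℤ) : f (volterraField v n) = volterraField (f ∘ v) n := by
  simp only [volterraField, map_sub, map_mul, Function.comp_apply]

theorem qcomm_volterraField_add_eq_zero {B : Type*} [Ring B] [Algebra R B] (ω : ℤ → ℤ → R)
    (v : ℤ → B) (hv : ∀ i j, i < j → qcomm (ω i j) (v i) (v j) = 0)
    (hnear : ∀ n, ω n (n + 1) = ω 0 1) (hfar : ∀ n m, n + 2 ≤ m → ω n m = 1)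
    {i j : ℤ} (hij : i < j) :
    qcomm (ω i j) (volterraField v i) (v j) + qcomm (ω i j) (v i) (volterraField v j) = 0 := by
  have hcomm : ∀ a b, a + 2 ≤ b → qcomm (1 : R) (v a) (v b) = 0 := fun a b hab => by
    simpa [hfar a b hab] using hv a b (by omega)
  have hl : qcomm (ω i j) (v i * v (i - 1)) (v j) = 0 := by
    simpa using qcomm_mul_left_eq_zero (hv i j hij) (hcomm (i - 1) j (by omega))
  have hr : qcomm (ω i j) (v i) (v (j + 1) * v j) = 0 := by
    simpa using qcomm_mul_right_eq_zero (hcomm i (j + 1) (by omega)) (hv i j hij)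
  rw [volterraField, volterraField, qcomm_sub_left, qcomm_sub_right, hl, hr, sub_zero, zero_sub,
    ← sub_eq_add_neg, sub_eq_zero]
  obtain rfl | rfl | hj : j = i + 1 ∨ j = i + 2 ∨ i + 3 ≤ j := by omega
  · have h1 : qcomm (ω i (i + 1)) (v (i + 1) * v i) (v (i + 1)) = 0 := by
      simpa using qcomm_mul_left_eq_zero (qcomm_one_self (R := R) (v (i + 1))) (hv i (i + 1) hij)
    have h4 : qcomm (ω i (i + 1)) (v i) (v (i + 1) * v i) = 0 := by
      simpa using qcomm_mul_right_eq_zero (hv i (i + 1) hij) (qcomm_one_self (R := R) (v i))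
    rw [add_sub_cancel_right, h1, h4]
  · -- both sides reduce to `(q - 1) • (v (i + 2) * v (i + 1) * v i)` with `q = ω 0 1`
    have hq : ω (i + 1) (i + 2) = ω i (i + 1) := by
      rw [hnear i, ← hnear (i + 1), add_assoc, one_add_one_eq_two]
    have h1 : qcomm (ω i (i + 1)) (v (i + 1) * v i) (v (i + 2)) = 0 := by
      have := qcomm_mul_left_eq_zero (hv (i + 1) (i + 2) (by omega)) (hcomm i (i + 2) le_rfl)
      rwa [mul_one, hq] at this
    have h4 : qcomm (ω i (i + 1)) (v i) (v (i + 2) * v (i + 1)) = 0 := by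
      simpa using qcomm_mul_right_eq_zero (hcomm i (i + 2) le_rfl) (hv i (i + 1) (by omega))
    rw [hfar i (i + 2) le_rfl, show i + 2 - 1 = i + 1 by ring,
      qcomm_eq_qcomm_add 1 (ω i (i + 1)), qcomm_eq_qcomm_add 1 (ω i (i + 1)) (v i), h1, h4,
      mul_assoc]
  · have h1 : qcomm (ω i j) (v (i + 1) * v i) (v j) = 0 := by
      simpa using qcomm_mul_left_eq_zero (hcomm (i + 1) j (by omega)) (hv i j hij)
    have h4 : qcomm (ω i j) (v i) (v j * v (j - 1)) = 0 := by
      simpa using qcomm_mul_right_eq_zero (hv i j hij) (hcomm i (j - 1) (by omega))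
    rw [h1, h4]

theorem qcomm_volterraField_add_mem_quantisationIdeal (ω : ℤ → ℤ → R)
    (hnear : ∀ n, ω n (n + 1) = ω 0 1) (hfar : ∀ n m, n + 2 ≤ m → ω n m = 1)
    {i j : ℤ} (hij : i < j) :
    qcomm (ω i j) (volterraField (ι R) i) (ι R j) + qcomm (ω i j) (ι R i) (volterraField (ι R) j)
      ∈ quantisationIdeal ω := by
  let π := (quantisationIdeal ω).ringCon.mkₐ R
  have hv : ∀ i j, i < j → qcomm (ω i j) (π (ι R i)) (π (ι R j)) = 0 := fun i j hij => by
    rw [← AlgHom.map_qcomm, TwoSidedIdeal.ringCon_mkₐ_eq_zero_iff]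
    exact TwoSidedIdeal.subset_span ⟨i, j, hij, rfl⟩
  rw [← TwoSidedIdeal.ringCon_mkₐ_eq_zero_iff (S := R), map_add, AlgHom.map_qcomm, AlgHom.map_qcomm,
    AlgHom.map_volterraField, AlgHom.map_volterraField]
  exact qcomm_volterraField_add_eq_zero ω (π ∘ ι R) hv hnear hfar hij

theorem weights_of_inversionFunctional_qcomm_volterraField_eq_zero [IsDomain R]
    (ω : ℤ → ℤ → R) (hω : ∀ i j, i < j → ω i j ≠ 0)
    (h : ∀ s i j, i < j → inversionFunctional ω s
      (qcomm (ω i j) (volterraField (ι R) i) (ι R j) +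
        qcomm (ω i j) (ι R i) (volterraField (ι R) j)) = 0) :
    (∀ n, ω n (n + 1) = ω 0 1) ∧ ∀ n m, n + 2 ≤ m → ω n m = 1 := by
  have hcubic : ∀ s i j, i < j → _ := fun s i j hij => by
    have := h s i j hij
    simp only [qcomm, volterraField, mul_sub, sub_mul, ← mul_assoc, map_add, map_sub, map_smul,
      inversionFunctional_ι_mul_ι_mul_ι, smul_eq_mul] at this
    exact this
  have h2 : ∀ n, ω n (n + 2) = 1 := fun n => by
    have := hcubic (3 * n + 3) n (n + 1) (by omega)
    simp (disch := omega) only [if_pos, if_neg, inversionWeight, List.map_cons, List.map_nil,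
      List.prod_cons, List.prod_nil, add_assoc, one_add_one_eq_two] at this
    refine mul_left_cancel₀ (hω n (n + 1) (by omega)) ?_
    linear_combination this
  have h1 : ∀ n, ω (n + 1) (n + 2) = ω n (n + 1) := fun n => by
    have := hcubic (3 * n + 3) n (n + 2) (by omega)
    simp (disch := omega) only [if_pos, if_neg, inversionWeight, List.map_cons, List.map_nil,
      List.prod_cons, List.prod_nil, h2, show n + 2 - 1 = n + 1 by ring] at this
    linear_combination this
  have h3 : ∀ n m, n + 2 ≤ m → ω n (m + 1) = 1 := fun n m hnm => by
    have := hcubic (n + 2 * m + 1) n m (by omega)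
    simp (disch := omega) only [if_pos, if_neg, inversionWeight, List.map_cons, List.map_nil,
      List.prod_cons, List.prod_nil] at this
    refine mul_left_cancel₀ (hω n m (by omega)) ?_
    linear_combination this
  refine ⟨fun n => ?_, fun n m hnm => ?_⟩
  · have hper : Function.Periodic (fun n => ω n (n + 1)) 1 := fun n => by
      simpa [add_assoc, one_add_one_eq_two] using h1 n
    simpa using hper.int_mul_eq n
  · obtain rfl | hnm := hnm.eq_or_lt
    · exact h2 n
    · simpa using h3 n (m - 1) (by omega)

end Volterra

theorem volterra_quantisation_ideal_general
    (ω : ℤ → ℤ → ℂ) (hω : ∀ i j : ℤ, i < j → ω i j ≠ 0)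
    (D : VolA →ₗ[ℂ] VolA)
    (hLeib : ∀ a b : VolA, D (a * b) = D a * b + a * D b)
    (hD : ∀ n : ℤ, D (uu n) = uu (n + 1) * uu n - uu n * uu (n - 1))
    (I : TwoSidedIdeal VolA)
    (hI : I = TwoSidedIdeal.span
      {x | ∃ i j : ℤ, i < j ∧ x = uu i * uu j - ω i j • (uu j * uu i)}) :
    (∀ x ∈ I, D x ∈ I) ↔
      ((∀ n : ℤ, ω n (n + 1) = ω 0 1) ∧ ∀ n m : ℤ, n + 2 ≤ m → ω n m = 1) := by
  obtain rfl : I = quantisationIdeal ω := hI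
  let u := FreeAlgebra.ι ℂ (X := ℤ)
  replace hD : ∀ n, D (u n) = volterraField u n := hD
  have hDgen : ∀ i j, D (qcomm (ω i j) (u i) (u j)) =
      qcomm (ω i j) (volterraField u i) (u j) + qcomm (ω i j) (u i) (volterraField u j) :=
    fun i j => by rw [D.map_qcomm_of_leibniz hLeib, hD, hD]
  constructor
  · refine fun hstab => weights_of_inversionFunctional_qcomm_volterraField_eq_zero ω hω
      fun s i j hij => inversionFunctional_eq_zero_of_mem_quantisationIdeal ω s ?_
    rw [← hDgen]
    exact hstab _ (TwoSidedIdeal.subset_span ⟨i, j, hij, rfl⟩)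
  · rintro ⟨hnear, hfar⟩ x hx
    refine TwoSidedIdeal.map_mem_span_of_leibniz D.toAddMonoidHom hLeib ?_ hx
    rintro _ ⟨i, j, hij, rfl⟩
    exact (hDgen i j).symm ▸ qcomm_volterraField_add_mem_quantisationIdeal ω hnear hfar hij

/-- the ideal generated by `u_i u_j − ω_{i,j} u_j u_i` (i < j) is stable
under the Volterra derivation iff `ω_{n,n+1} = ω_{0,1}` and `ω_{n,m} = 1` for `m − n ≥ 2`. -/
theorem volterra_quantisation_ideal
    (ω : ℤ → ℤ → ℂ) (hω : ∀ i j : ℤ, i < j → ω i j ≠ 0)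
    (hsym : ∀ i j : ℤ, i < j → ω j i = (ω i j)⁻¹)
    (D : VolA →ₗ[ℂ] VolA)
    (hLeib : ∀ a b : VolA, D (a * b) = D a * b + a * D b)
    (hD : ∀ n : ℤ, D (uu n) = uu (n + 1) * uu n - uu n * uu (n - 1))
    (I : TwoSidedIdeal VolA)
    (hI : I = TwoSidedIdeal.span
      {x | ∃ i j : ℤ, i < j ∧ x = uu i * uu j - ω i j • (uu j * uu i)}) :
    (∀ x ∈ I, D x ∈ I) ↔
      ((∀ n : ℤ, ω n (n + 1) = ω 0 1) ∧ ∀ n m : ℤ, n + 2 ≤ m → ω n m = 1) :=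
  volterra_quantisation_ideal_general ω hω D hLeib hD I hI
end
end

section
/- Let A₃ = ℂ⟨u₁,u₂,u₃⟩ and let I be the ideal generated by q^{-1}u_n u_{n+1} − q u_{n+1}u_n − iθ for n ∈ ℤ/3, where q = e^{iℏ}, ℏ, θ ∈ ℝ. In A₃/I, the element 𝓗 = sin(ℏ)·H₂ + θ(2 + cos(2ℏ))·H₁ is central, where H₁ = u₁+u₂+u₃ and H₂ = Σ_{σ ∈ S₃} u_{σ(1)}u_{σ(2)}u_{σ(3)} (sum over all six orderings of the product u₁u₂u₃). -/
/-!
With `c = iθ`, the relations are rewriting rules towards words ordered by `u₀ < u₁ < u₂`: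
`u₁u₀ = q⁻²u₀u₁ − cq⁻¹`, `u₂u₁ = q⁻²u₁u₂ − cq⁻¹`, `u₂u₀ = q²u₀u₂ + cq`.
For `H = (q⁻¹ − q)H₂ − c(q² + 4 + q⁻²)H₁`, reducing both `Hu₀` and `u₀H` to ordered words
gives the same result. The relations, `H₁` and `H₂` are invariant under the cyclic shift
`uₙ ↦ uₙ₊₁`, so `H` commutes with every generator. Finally `sin ℏ = (i/2)(q⁻¹ − q)` and
`θ(2 + cos 2ℏ) = −(i/2)·iθ(q² + 4 + q⁻²)`, so `𝓗` is `i/2` times `H`.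
-/

open scoped Classical

noncomputable section

abbrev A3 : Type := FreeAlgebra ℂ (ZMod 3)

def v3 (n : ZMod 3) : A3 := FreeAlgebra.ι ℂ n

theorem TwoSidedIdeal.mkₐ_eq_zero_iff {R A : Type*} [CommSemiring R] [Ring A] [Algebra R A]
    (I : TwoSidedIdeal A) (a : A) : I.ringCon.mkₐ R a = 0 ↔ a ∈ I :=
  RingCon.eq _

namespace Periodic3

variable {K R : Type*} [Field K] [Ring R] [Algebra K R]

def Relations (q c : K) (x : ZMod 3 → R) : Prop :=
  ∀ n, q⁻¹ • (x n * x (n + 1)) - q • (x (n + 1) * x n) = algebraMap K R c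

def H₁ (x : ZMod 3 → R) : R := ∑ n, x n

def H₂ (x : ZMod 3 → R) : R := ∑ σ : Equiv.Perm (ZMod 3), x (σ 0) * x (σ 1) * x (σ 2)

def hamiltonian (q c : K) (x : ZMod 3 → R) : R :=
  (q⁻¹ - q) • H₂ x - (c * (q ^ 2 + 4 + q⁻¹ ^ 2)) • H₁ x

theorem H₁_eq (x : ZMod 3 → R) : H₁ x = x 0 + x 1 + x 2 :=
  Fin.sum_univ_three x

theorem H₂_eq (x : ZMod 3 → R) :
    H₂ x = x 0 * x 1 * x 2 + x 0 * x 2 * x 1 + x 1 * x 0 * x 2 + x 1 * x 2 * x 0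
      + x 2 * x 0 * x 1 + x 2 * x 1 * x 0 := by
  have huniv : (Finset.univ : Finset (Equiv.Perm (ZMod 3))) =
      {Equiv.refl _, Equiv.swap 0 1, Equiv.swap 0 2, Equiv.swap 1 2,
        Equiv.swap 0 1 * Equiv.swap 1 2, Equiv.swap 1 2 * Equiv.swap 0 1} := by decide
  rw [H₂, huniv]
  simp +decide only [Finset.sum_insert, Finset.mem_insert, Finset.mem_singleton,
    Finset.sum_singleton, Equiv.Perm.coe_mul, Function.comp_apply, Equiv.refl_apply,
    Equiv.swap_apply_left, Equiv.swap_apply_right, Equiv.swap_apply_def, ↓reduceIte]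
  abel

theorem H₁_comp_addRight (x : ZMod 3 → R) (k : ZMod 3) : H₁ (fun n ↦ x (n + k)) = H₁ x :=
  Equiv.sum_comp (Equiv.addRight k) x

theorem H₂_comp_addRight (x : ZMod 3 → R) (k : ZMod 3) : H₂ (fun n ↦ x (n + k)) = H₂ x :=
  Equiv.sum_comp (Equiv.mulLeft (Equiv.addRight k)) fun σ ↦ x (σ 0) * x (σ 1) * x (σ 2)

theorem hamiltonian_comp_addRight (q c : K) (x : ZMod 3 → R) (k : ZMod 3) :
    hamiltonian q c (fun n ↦ x (n + k)) = hamiltonian q c x := by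
  rw [hamiltonian, hamiltonian, H₁_comp_addRight, H₂_comp_addRight]

namespace Relations

variable {q c : K} {x : ZMod 3 → R}

theorem comp_addRight (h : Relations q c x) (k : ZMod 3) : Relations q c (fun n ↦ x (n + k)) :=
  fun n ↦ by simpa only [add_right_comm n 1 k] using h (n + k)

theorem succ_mul_self (h : Relations q c x) (hq : q ≠ 0) (n : ZMod 3) :
    x (n + 1) * x n = q⁻¹ ^ 2 • (x n * x (n + 1)) - (c * q⁻¹) • 1 := by
  rw [Relations, Algebra.algebraMap_eq_smul_one] at h
  linear_combination (norm := skip) (-q⁻¹) • h n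
  match_scalars <;> field_simp <;> ring

theorem mul_succ (h : Relations q c x) (hq : q ≠ 0) (n : ZMod 3) :
    x n * x (n + 1) = q ^ 2 • (x (n + 1) * x n) + (c * q) • 1 := by
  rw [Relations, Algebra.algebraMap_eq_smul_one] at h
  linear_combination (norm := skip) q • h n
  match_scalars <;> field_simp <;> ring

theorem commute_zero (h : Relations q c x) (hq : q ≠ 0) : Commute (hamiltonian q c x) (x 0) := by
  have h10 : x 1 * x 0 = q⁻¹ ^ 2 • (x 0 * x 1) - (c * q⁻¹) • 1 := h.succ_mul_self hq 0
  have h21 : x 2 * x 1 = q⁻¹ ^ 2 • (x 1 * x 2) - (c * q⁻¹) • 1 := h.succ_mul_self hq 1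
  have h20 : x 2 * x 0 = q ^ 2 • (x 0 * x 2) + (c * q) • 1 := h.mul_succ hq 2
  have assoc {a b z : R} (hab : a * b = z) (y : R) : a * (b * y) = z * y := by
    rw [← mul_assoc, hab]
  simp only [Commute, SemiconjBy, hamiltonian, H₁_eq, H₂_eq, sub_mul, mul_sub, add_mul, mul_add,
    smul_mul_assoc, mul_smul_comm, mul_assoc, h10, h21, h20, assoc h10, smul_sub, smul_add,
    smul_smul, one_mul, mul_one]
  match_scalars <;> field_simp <;> ring

theorem mkₐ {A : Type*} [Ring A] [Algebra K A] (I : TwoSidedIdeal A) {x : ZMod 3 → A}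
    (hx : ∀ n, q⁻¹ • (x n * x (n + 1)) - q • (x (n + 1) * x n) - algebraMap K A c ∈ I) :
    Relations q c (fun n ↦ I.ringCon.mkₐ K (x n)) := fun n ↦ by
  have := (I.mkₐ_eq_zero_iff (R := K) _).2 (hx n)
  rwa [map_sub, map_sub, map_smul, map_smul, map_mul, map_mul, AlgHom.commutes, sub_eq_zero] at this

theorem commute (h : Relations q c x) (hq : q ≠ 0) (k : ZMod 3) :
    Commute (hamiltonian q c x) (x k) := by
  simpa only [hamiltonian_comp_addRight, zero_add] using (h.comp_addRight k).commute_zero hq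

end Relations

end Periodic3

theorem Complex.ofReal_sin_eq_exp (x : ℝ) :
    (Real.sin x : ℂ) =
      Complex.I / 2 * ((Complex.exp (Complex.I * x))⁻¹ - Complex.exp (Complex.I * x)) := by
  rw [Complex.ofReal_sin, Complex.sin, ← Complex.exp_neg]
  ring_nf

theorem Complex.ofReal_cos_two_mul_eq_exp (x : ℝ) :
    (Real.cos (2 * x) : ℂ) =
      ((Complex.exp (Complex.I * x)) ^ 2 + (Complex.exp (Complex.I * x))⁻¹ ^ 2) / 2 := by
  rw [Complex.ofReal_cos, Complex.cos, ← Complex.exp_neg, ← Complex.exp_nat_mul,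
    ← Complex.exp_nat_mul]
  push_cast
  ring_nf

/-- for `q = e^{iℏ}`, in `A₃/I` with relations
`q⁻¹ u_n u_{n+1} − q u_{n+1}u_n − iθ` (n mod 3), the element
`𝓗 = sin(ℏ)·H₂ + θ(2+cos(2ℏ))·H₁` is central, where `H₁ = u₁+u₂+u₃` and
`H₂ = Σ_{σ∈S₃} u_{σ(1)}u_{σ(2)}u_{σ(3)}`. -/
theorem periodic3_pencil_central
    (ℏ θ : ℝ) (q : ℂ) (hq : q = Complex.exp (Complex.I * (ℏ : ℂ)))
    (I : TwoSidedIdeal A3)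
    (hI : I = TwoSidedIdeal.span
      {x | ∃ n : ZMod 3, x = q⁻¹ • (v3 n * v3 (n + 1)) - q • (v3 (n + 1) * v3 n)
            - algebraMap ℂ A3 (Complex.I * (θ : ℂ))})
    (H₁ H₂ 𝓗 : A3)
    (hH₁ : H₁ = v3 0 + v3 1 + v3 2)
    (hH₂ : H₂ = ∑ σ : Equiv.Perm (Fin 3),
      v3 ((σ 0).val : ZMod 3) * v3 ((σ 1).val : ZMod 3) * v3 ((σ 2).val : ZMod 3))
    (h𝓗 : 𝓗 = ((Real.sin ℏ : ℝ) : ℂ) • H₂ + ((θ : ℂ) * (2 + ((Real.cos (2 * ℏ) : ℝ) : ℂ))) • H₁) :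
    ∀ k : ZMod 3, 𝓗 * v3 k - v3 k * 𝓗 ∈ I := by
  intro k
  set f := I.ringCon.mkₐ ℂ
  have hrel : Periodic3.Relations q (Complex.I * θ) (fun n ↦ f (v3 n)) :=
    Periodic3.Relations.mkₐ I fun n ↦ hI ▸ TwoSidedIdeal.subset_span ⟨n, rfl⟩
  have hf𝓗 :
      f 𝓗 = (Complex.I / 2) • Periodic3.hamiltonian q (Complex.I * θ) (fun n ↦ f (v3 n)) := by
    have hfH₁ : f H₁ = Periodic3.H₁ (fun n ↦ f (v3 n)) := by
      simp only [hH₁, Periodic3.H₁_eq, map_add]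
    have hfH₂ : f H₂ = Periodic3.H₂ (fun n ↦ f (v3 n)) := by
      simp only [hH₂, map_sum, map_mul, Periodic3.H₂]
      -- `ZMod 3` is `Fin 3`, and `((i : Fin 3).val : ZMod 3)` reduces to `i`
      rfl
    rw [h𝓗, map_add, map_smul, map_smul, hfH₁, hfH₂, Periodic3.hamiltonian, smul_sub, smul_smul,
      smul_smul, Complex.ofReal_sin_eq_exp, Complex.ofReal_cos_two_mul_eq_exp, ← hq]
    match_scalars
    · ring
    · linear_combination (θ / 2 * (q ^ 2 + 4 + q⁻¹ ^ 2) : ℂ) * Complex.I_sq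
  rw [← I.mkₐ_eq_zero_iff (R := ℂ), map_sub, map_mul, map_mul, sub_eq_zero, hf𝓗]
  exact ((hrel.commute (by simp [hq]) k).smul_left _).eq
end
end

section
/- Let A₃ = ℂ⟨u₁,u₂,u₃⟩ with the period-3 Volterra derivation ∂(u_n) = q(u_{n+1}u_n − u_n u_{n−1}) (indices mod 3, q ∈ ℂ*, q² = ω), and let I be the ideal generated by u_n u_{n+1} − ω u_{n+1}u_n for n ∈ ℤ/3. Then in A₃/I the Heisenberg form holds: ∂(u_n) = (q^{-1} − q)^{-1}[H₁, u_n] for each n, where H₁ = u₁+u₂+u₃, provided q² ≠ 1. -/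
open scoped Classical

noncomputable section

/-!
Multiplying `∂(u_n) = q (u_{n+1} u_n - u_n u_{n-1})` by `q⁻¹ - q` replaces `q` by `1 - ω`, and
writing `H₁ = u_{n-1} + u_n + u_{n+1}`, the identity
`(1 - ω)(u_{n+1} u_n - u_n u_{n-1}) - [H₁, u_n] = r_n - r_{n-1}` with
`r_m = u_m u_{m+1} - ω u_{m+1} u_m` already holds in the free algebra.
-/

theorem smul_volterra_sub_commutator_eq {R A : Type*} [CommRing R] [Ring A] [Algebra R A]
    (ω : R) (x y z : A) :
    (1 - ω) • (z * y - y * x) - ((x + y + z) * y - y * (x + y + z)) =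
      (y * z - ω • (z * y)) - (x * y - ω • (y * x)) := by
  simp only [sub_smul, one_smul, smul_sub, add_mul, mul_add]
  abel

theorem sum_zmod_three_eq_around {M : Type*} [AddCommMonoid M] (f : ZMod 3 → M) (n : ZMod 3) :
    f 0 + f 1 + f 2 = f (n - 1) + f n + f (n + 1) := by
  fin_cases n
  · exact (add_rotate _ _ _).symm
  · rfl
  · exact add_rotate _ _ _

theorem periodic3_heisenberg_form_general
    (q ω : ℂ) (hq : q ≠ 0) (hωq : ω = q ^ 2)
    (D : A3 →ₗ[ℂ] A3)
    (hD : ∀ n : ZMod 3, D (v3 n) = q • (v3 (n + 1) * v3 n - v3 n * v3 (n - 1)))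
    (I : TwoSidedIdeal A3)
    (hI : I = TwoSidedIdeal.span
      {x | ∃ n : ZMod 3, x = v3 n * v3 (n + 1) - ω • (v3 (n + 1) * v3 n)})
    (H₁ : A3) (hH₁ : H₁ = v3 0 + v3 1 + v3 2) :
    ∀ n : ZMod 3, (q⁻¹ - q) • D (v3 n) - (H₁ * v3 n - v3 n * H₁) ∈ I := by
  intro n
  have hrel (m : ZMod 3) : v3 m * v3 (m + 1) - ω • (v3 (m + 1) * v3 m) ∈ I :=
    hI ▸ TwoSidedIdeal.subset_span ⟨m, rfl⟩
  have hscalar : (q⁻¹ - q) * q = 1 - ω := by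
    rw [hωq]
    field_simp
  rw [hD, smul_smul, hscalar, hH₁, sum_zmod_three_eq_around v3 n, smul_volterra_sub_commutator_eq]
  simpa using I.sub_mem (hrel n) (hrel (n - 1))

/-- for the period-3 Volterra derivation `∂(u_n) = q(u_{n+1}u_n − u_n u_{n−1})`
and the ideal with relations `u_n u_{n+1} = ω u_{n+1}u_n`, `ω = q² ≠ 1`, the Heisenberg form
`∂(u_n) = (q⁻¹ − q)⁻¹ [H₁, u_n]` holds in the quotient `A₃/I`, i.e. the difference
`(q⁻¹ − q)·∂(u_n) − [H₁,u_n]` lies in `I`. -/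
theorem periodic3_heisenberg_form
    (q ω : ℂ) (hq : q ≠ 0) (hωq : ω = q ^ 2) (hω1 : q ^ 2 ≠ 1)
    (D : A3 →ₗ[ℂ] A3)
    (hLeib : ∀ a b : A3, D (a * b) = D a * b + a * D b)
    (hD : ∀ n : ZMod 3, D (v3 n) = q • (v3 (n + 1) * v3 n - v3 n * v3 (n - 1)))
    (I : TwoSidedIdeal A3)
    (hI : I = TwoSidedIdeal.span
      {x | ∃ n : ZMod 3, x = v3 n * v3 (n + 1) - ω • (v3 (n + 1) * v3 n)})
    (H₁ : A3) (hH₁ : H₁ = v3 0 + v3 1 + v3 2) :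
    ∀ n : ZMod 3, (q⁻¹ - q) • D (v3 n) - (H₁ * v3 n - v3 n * H₁) ∈ I :=
  periodic3_heisenberg_form_general q ω hq hωq D hD I hI H₁ hH₁
end
end

section
/- Let A₄ = ℂ⟨u₁,u₂,u₃,u₄⟩ and I_b the ideal generated by the relations u₁u₂ = ω u₂u₁, u₃u₄ = ω u₄u₃, u₂u₃ = −ω u₃u₂, u₄u₁ = −ω u₁u₄, u₁u₃ = −u₃u₁, u₂u₄ = −u₄u₂, with ω ∈ ℂ*. Then in A₄/I_b the elements 𝓗 = u₄u₃u₂u₁, 𝓗₁ = u₃²u₁², 𝓗₂ = u₄²u₂² are central, and the elements H₁ = u₃u₁ and H₂ = u₄u₂ anticommute with H = u₁+u₂+u₃+u₄ while H², H₁, H₂ pairwise commute. -/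
open scoped Classical

noncomputable section

abbrev A4 : Type := FreeAlgebra ℂ (ZMod 4)

def v4 (n : ZMod 4) : A4 := FreeAlgebra.ι ℂ n

/-!
In `A₄/I_b` any two generators `q`-commute, `uᵢuⱼ = qᵢⱼ uⱼuᵢ`, with `qⱼᵢ = qᵢⱼ⁻¹` because
`ω ≠ 0`. Hence a monomial moves past a generator at the cost of the product of the scalars met on
the way, and each claim reduces to this product being `1` (commutation) or `-1`
(anticommutation). The relations are invariant under `uᵢ ↦ uᵢ₊₁`, `ω ↦ -ω`, which carries the
claims about `u₃²u₁²` and `u₃u₁` to those about `u₄²u₂²` and `u₄u₂`.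
-/

def QCommute {K R : Type*} [CommSemiring K] [Semiring R] [Algebra K R] (q : K) (x y : R) :
    Prop :=
  x * y = q • (y * x)

namespace QCommute

section Semiring

variable {K R : Type*} [CommSemiring K] [Semiring R] [Algebra K R] {p q : K} {x y z : R}

theorem refl (x : R) : QCommute (1 : K) x x := by
  rw [QCommute, one_smul]

theorem of_eq (h : QCommute p x y) (hpq : p = q) : QCommute q x y :=
  hpq ▸ h

theorem commute (h : QCommute q x y) (hq : q = 1) : Commute x y := by
  rw [QCommute, hq, one_smul] at h
  exact h

theorem mul_right (hy : QCommute p x y) (hz : QCommute q x z) : QCommute (p * q) x (y * z) := by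
  rw [QCommute] at *
  rw [← mul_assoc, hy, smul_mul_assoc, mul_assoc, hz, mul_smul_comm, smul_smul, mul_assoc]

theorem mul_left (hx : QCommute p x z) (hy : QCommute q y z) : QCommute (p * q) (x * y) z := by
  rw [QCommute] at *
  rw [mul_assoc, hy, mul_smul_comm, ← mul_assoc, hx, smul_mul_assoc, smul_smul, mul_assoc,
    mul_comm p q]

theorem add_right (hy : QCommute q x y) (hz : QCommute q x z) : QCommute q x (y + z) := by
  rw [QCommute] at *
  rw [mul_add, hy, hz, add_mul, smul_add]

theorem pow_left (h : QCommute q x y) (n : ℕ) : QCommute (q ^ n) (x ^ n) y := by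
  induction n with
  | zero => rw [QCommute, pow_zero, pow_zero, one_mul, mul_one, one_smul]
  | succ n ih => simpa only [pow_succ] using ih.mul_left h

theorem pow_right (h : QCommute q x y) (n : ℕ) : QCommute (q ^ n) x (y ^ n) := by
  induction n with
  | zero => rw [QCommute, pow_zero, pow_zero, one_mul, mul_one, one_smul]
  | succ n ih => simpa only [pow_succ] using ih.mul_right h

end Semiring

theorem symm {K R : Type*} [Semifield K] [Semiring R] [Algebra K R] {q : K} {x y : R}
    (hq : q ≠ 0) (h : QCommute q x y) : QCommute q⁻¹ y x := by
  rw [QCommute, h, smul_smul, inv_mul_cancel₀ hq, one_smul]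

theorem neg_one_symm {K R : Type*} [CommRing K] [Ring R] [Algebra K R] {x y : R}
    (h : QCommute (-1 : K) x y) : QCommute (-1 : K) y x := by
  rw [QCommute, neg_one_smul] at *
  rw [h, neg_neg]

theorem add_mul_add_eq_zero {K R : Type*} [CommRing K] [Ring R] [Algebra K R] {x y : R}
    (h : QCommute (-1 : K) x y) : x * y + y * x = 0 := by
  rw [h, neg_one_smul, neg_add_cancel]

end QCommute

/-- The relations of `I_b` in a `K`-algebra, with `a, b, c, d` standing for `u₁, u₂, u₃, u₄`. -/
structure IbRelations {K R : Type*} [CommRing K] [Ring R] [Algebra K R] (ω : K) (a b c d : R) :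
    Prop where
  ab : QCommute ω a b
  cd : QCommute ω c d
  bc : QCommute (-ω) b c
  da : QCommute (-ω) d a
  ac : QCommute (-1 : K) a c
  bd : QCommute (-1 : K) b d

namespace IbRelations

variable {K R : Type*} [Field K] [Ring R] [Algebra K R] {ω : K} {a b c d : R}

theorem ca (h : IbRelations ω a b c d) : QCommute (-1 : K) c a := h.ac.neg_one_symm

theorem db (h : IbRelations ω a b c d) : QCommute (-1 : K) d b := h.bd.neg_one_symm

theorem rotate (h : IbRelations ω a b c d) : IbRelations (-ω) b c d a where
  ab := h.bc
  cd := h.da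
  bc := h.cd.of_eq (neg_neg ω).symm
  da := h.ab.of_eq (neg_neg ω).symm
  ac := h.bd
  bd := h.ca

variable (h : IbRelations ω a b c d) (hω : ω ≠ 0)
include h hω

theorem ba : QCommute ω⁻¹ b a := h.ab.symm hω

theorem dc : QCommute ω⁻¹ d c := h.cd.symm hω

theorem cb : QCommute (-ω)⁻¹ c b := h.bc.symm (neg_ne_zero.2 hω)

theorem ad : QCommute (-ω)⁻¹ a d := h.da.symm (neg_ne_zero.2 hω)

theorem commute_dcba :
    Commute (d * c * b * a) a ∧ Commute (d * c * b * a) b ∧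
      Commute (d * c * b * a) c ∧ Commute (d * c * b * a) d := by
  refine ⟨?_, ?_, ?_, ?_⟩
  · exact (((h.da.mul_left h.ca).mul_left (h.ba hω)).mul_left (.refl a)).commute (by field_simp)
  · exact (((h.db.mul_left (h.cb hω)).mul_left (.refl b)).mul_left h.ab).commute (by field_simp)
  · exact ((((h.dc hω).mul_left (.refl c)).mul_left h.bc).mul_left h.ac).commute (by field_simp)
  · exact ((((QCommute.refl d).mul_left h.cd).mul_left h.bd).mul_left (h.ad hω)).commute
      (by field_simp)

theorem commute_sq_c_mul_sq_a :
    Commute (c ^ 2 * a ^ 2) a ∧ Commute (c ^ 2 * a ^ 2) b ∧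
      Commute (c ^ 2 * a ^ 2) c ∧ Commute (c ^ 2 * a ^ 2) d := by
  refine ⟨?_, ?_, ?_, ?_⟩
  · exact ((h.ca.pow_left 2).mul_left ((QCommute.refl a).pow_left 2)).commute (by norm_num)
  · exact (((h.cb hω).pow_left 2).mul_left (h.ab.pow_left 2)).commute (by field_simp)
  · exact (((QCommute.refl c).pow_left 2).mul_left (h.ac.pow_left 2)).commute (by norm_num)
  · exact ((h.cd.pow_left 2).mul_left ((h.ad hω).pow_left 2)).commute (by field_simp)

theorem qcommute_ca_add : QCommute (-1 : K) (c * a) (a + b + c + d) := by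
  refine (((?_ : QCommute _ _ a).add_right ?_).add_right ?_).add_right ?_
  · exact (h.ca.mul_left (.refl a)).of_eq (mul_one _)
  · exact ((h.cb hω).mul_left h.ab).of_eq (by field_simp)
  · exact ((QCommute.refl c).mul_left h.ac).of_eq (one_mul _)
  · exact (h.cd.mul_left (h.ad hω)).of_eq (by field_simp)

theorem qcommute_db_add : QCommute (-1 : K) (d * b) (a + b + c + d) := by
  have hsum : b + c + d + a = a + b + c + d := by abel
  exact hsum ▸ h.rotate.qcommute_ca_add (neg_ne_zero.2 hω)

theorem commute_ca_db : Commute (c * a) (d * b) :=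
  ((h.cd.mul_right (h.cb hω)).mul_left ((h.ad hω).mul_right h.ab)).commute (by field_simp)

end IbRelations

namespace TwoSidedIdeal

variable (K : Type*) {A : Type*} [CommRing K] [Ring A] [Algebra K A] (I : TwoSidedIdeal A)

theorem mem_iff_mkₐ_eq_zero (x : A) : x ∈ I ↔ I.ringCon.mkₐ K x = 0 :=
  (I.mem_iff x).trans (RingCon.eq _).symm

theorem mul_sub_mul_mem_of_commute {x y : A}
    (h : Commute (I.ringCon.mkₐ K x) (I.ringCon.mkₐ K y)) : x * y - y * x ∈ I :=
  (I.mem_iff_mkₐ_eq_zero K _).2 (by rw [map_sub, map_mul, map_mul, h.eq, sub_self])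

theorem mul_add_mul_mem_of_qcommute {x y : A}
    (h : QCommute (-1 : K) (I.ringCon.mkₐ K x) (I.ringCon.mkₐ K y)) : x * y + y * x ∈ I :=
  (I.mem_iff_mkₐ_eq_zero K _).2 (by rw [map_add, map_mul, map_mul, h.add_mul_add_eq_zero])

theorem ibRelations_mkₐ {ω : K} {a b c d : A}
    (hI : {a * b - ω • (b * a), c * d - ω • (d * c), b * c + ω • (c * b), d * a + ω • (a * d),
      a * c + c * a, b * d + d * b} ⊆ (I : Set A)) :
    IbRelations ω (I.ringCon.mkₐ K a) (I.ringCon.mkₐ K b) (I.ringCon.mkₐ K c)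
      (I.ringCon.mkₐ K d) := by
  have hzero : ∀ x ∈ _, I.ringCon.mkₐ K x = 0 := fun x hx => (I.mem_iff_mkₐ_eq_zero K x).1 (hI hx)
  simp only [Set.forall_mem_insert, Set.mem_singleton_iff, forall_eq, map_sub, map_add, map_mul,
    map_smul] at hzero
  obtain ⟨hab, hcd, hbc, hda, hac, hbd⟩ := hzero
  rw [sub_eq_zero] at hab hcd
  rw [add_eq_zero_iff_eq_neg, ← neg_smul] at hbc hda
  rw [add_eq_zero_iff_eq_neg, ← neg_one_smul K] at hac hbd
  exact ⟨hab, hcd, hbc, hda, hac, hbd⟩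

end TwoSidedIdeal

theorem ZMod.forall_four {P : ZMod 4 → Prop} (h : P 0 ∧ P 1 ∧ P 2 ∧ P 3) : ∀ k, P k := by
  intro k
  fin_cases k
  exacts [h.1, h.2.1, h.2.2.1, h.2.2.2]

/-- in `A₄/I_b`, the elements `𝓗 = u₄u₃u₂u₁`, `𝓗₁ = u₃²u₁²`, `𝓗₂ = u₄²u₂²`
are central; `H₁ = u₃u₁` and `H₂ = u₄u₂` anticommute with `H = u₁+u₂+u₃+u₄`;
and `H², H₁, H₂` pairwise commute. (Generators `u₁,…,u₄` are `v4 0,…,v4 3`.) -/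
theorem periodic4_Ib_structure
    (ω : ℂ) (hω : ω ≠ 0)
    (Ib : TwoSidedIdeal A4)
    (hIb : Ib = TwoSidedIdeal.span
      ({v4 0 * v4 1 - ω • (v4 1 * v4 0),
        v4 2 * v4 3 - ω • (v4 3 * v4 2),
        v4 1 * v4 2 + ω • (v4 2 * v4 1),
        v4 3 * v4 0 + ω • (v4 0 * v4 3),
        v4 0 * v4 2 + v4 2 * v4 0,
        v4 1 * v4 3 + v4 3 * v4 1} : Set A4))
    (H H₁ H₂ : A4)
    (hH : H = v4 0 + v4 1 + v4 2 + v4 3)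
    (hH₁ : H₁ = v4 2 * v4 0) (hH₂ : H₂ = v4 3 * v4 1) :
    (∀ k : ZMod 4,
        (v4 3 * v4 2 * v4 1 * v4 0) * v4 k - v4 k * (v4 3 * v4 2 * v4 1 * v4 0) ∈ Ib) ∧
    (∀ k : ZMod 4, (v4 2 ^ 2 * v4 0 ^ 2) * v4 k - v4 k * (v4 2 ^ 2 * v4 0 ^ 2) ∈ Ib) ∧
    (∀ k : ZMod 4, (v4 3 ^ 2 * v4 1 ^ 2) * v4 k - v4 k * (v4 3 ^ 2 * v4 1 ^ 2) ∈ Ib) ∧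
    (H₁ * H + H * H₁ ∈ Ib) ∧ (H₂ * H + H * H₂ ∈ Ib) ∧
    (H ^ 2 * H₁ - H₁ * H ^ 2 ∈ Ib) ∧ (H ^ 2 * H₂ - H₂ * H ^ 2 ∈ Ib) ∧
    (H₁ * H₂ - H₂ * H₁ ∈ Ib) := by
  subst hH hH₁ hH₂
  have hrel := Ib.ibRelations_mkₐ ℂ (hIb ▸ TwoSidedIdeal.subset_span)
  have anti₁ := hrel.qcommute_ca_add hω
  have anti₂ := hrel.qcommute_db_add hω
  refine ⟨fun k => Ib.mul_sub_mul_mem_of_commute ℂ ?_, fun k => Ib.mul_sub_mul_mem_of_commute ℂ ?_,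
    fun k => Ib.mul_sub_mul_mem_of_commute ℂ ?_, Ib.mul_add_mul_mem_of_qcommute ℂ ?_,
    Ib.mul_add_mul_mem_of_qcommute ℂ ?_, Ib.mul_sub_mul_mem_of_commute ℂ ?_,
    Ib.mul_sub_mul_mem_of_commute ℂ ?_, Ib.mul_sub_mul_mem_of_commute ℂ ?_⟩ <;>
    simp only [map_mul, map_pow, map_add]
  · revert k
    exact ZMod.forall_four (hrel.commute_dcba hω)
  · revert k
    exact ZMod.forall_four (hrel.commute_sq_c_mul_sq_a hω)
  · obtain ⟨h1, h2, h3, h0⟩ := hrel.rotate.commute_sq_c_mul_sq_a (neg_ne_zero.2 hω)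
    revert k
    exact ZMod.forall_four ⟨h0, h1, h2, h3⟩
  · exact anti₁
  · exact anti₂
  · exact ((anti₁.pow_right 2).commute (by norm_num)).symm
  · exact ((anti₂.pow_right 2).commute (by norm_num)).symm
  · exact hrel.commute_ca_db hω
end
end

section
/- Let A₅ = ℂ⟨u₁,…,u₅⟩ with the ideal I generated by u_n u_{n+1} − ω u_{n+1}u_n (n ∈ ℤ/5, indices mod 5) and u_n u_m − u_m u_n for all other pairs. Then in A₅/I the element 𝓗 = u₅u₄u₃u₂u₁ is central, and H₁ = Σ_{k=1}^5 u_k and H₂ = Σ_{k∈ℤ/5}(u_k² + u_k u_{k+1} + u_{k+1}u_k) commute: [H₁,H₂] = 0 in A₅/I. -/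
open scoped Classical

noncomputable section

/-- `A₅ = ℂ⟨u₁,…,u₅⟩`, generators indexed by `ZMod 5` (so `u₁,…,u₅` are `v5 0,…,v5 4`). -/
abbrev A5 : Type := FreeAlgebra ℂ (ZMod 5)

def v5 (n : ZMod 5) : A5 := FreeAlgebra.ι ℂ n

/-!
Write `u k` for the image of `v5 k` in `A₅/I`. Then `u j` skew-commutes with `u k` by a factor
depending only on `k - j`: `ω` if `k = j + 1`, `ω⁻¹` if `k = j - 1`, and `1` otherwise. Moving
`u k` across `𝓗 = u 4 * u 3 * u 2 * u 1 * u 0` therefore produces the factor `ω * ω⁻¹ = 1`.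

For the Hamiltonians, `H₁ ^ 2 = H₂ + 2 T` with `T = ∑ k, u k * u (k + 2)`, so it suffices that
`H₁` commutes with `T`. Here
`[u j, T] = (ω - 1) u (j+1) u (j+3) u j + (ω⁻¹ - 1) u (j+2) u (j+4) u j`, and after shifting `j`
by one the monomials of the second family are `ω` times those of the first, so the sum over `j`
vanishes.
-/

open Finset

section SkewCommute

variable {R A : Type*} [CommSemiring R] [Semiring A] [Algebra R A]

def SkewCommute (c : R) (x y : A) : Prop := x * y = c • (y * x)

variable {c d : R} {x y z : A}

theorem Commute.skewCommute_one (h : Commute x y) : SkewCommute (1 : R) x y := by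
  rw [SkewCommute, one_smul]; exact h.eq

namespace SkewCommute

theorem commute (h : SkewCommute (1 : R) x y) : Commute x y := by
  rw [SkewCommute, one_smul] at h; exact h

theorem mul_right (hy : SkewCommute c x y) (hz : SkewCommute d x z) :
    SkewCommute (c * d) x (y * z) := by
  unfold SkewCommute at *
  rw [← mul_assoc, hy, smul_mul_assoc, mul_assoc, hz, mul_smul_comm, smul_smul, mul_assoc]

theorem symm (h : SkewCommute c x y) (hdc : d * c = 1) : SkewCommute d y x := by
  unfold SkewCommute at *
  rw [h, smul_smul, hdc, one_smul]

end SkewCommute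

end SkewCommute

theorem SkewCommute.mul_sub_mul {R A : Type*} [CommRing R] [Ring A] [Algebra R A] {c : R}
    {x y : A} (h : SkewCommute c x y) : x * y - y * x = (c - 1) • (y * x) := by
  rw [h, sub_smul, one_smul]

theorem ZMod.sum_univ_five {M : Type*} [AddCommMonoid M] (f : ZMod 5 → M) :
    ∑ i, f i = f 0 + f 1 + f 2 + f 3 + f 4 :=
  Fin.sum_univ_five f

theorem ZMod.sum_add_right {n : ℕ} [NeZero n] {M : Type*} [AddCommMonoid M] (f : ZMod n → M)
    (a : ZMod n) : ∑ k, f (k + a) = ∑ k, f k :=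
  Equiv.sum_comp (Equiv.addRight a) f

structure PeriodicSkewRelations {R A : Type*} [CommSemiring R] [Semiring A] [Algebra R A]
    (ω : R) (u : ZMod 5 → A) : Prop where
  skewCommute_succ : ∀ n, SkewCommute ω (u n) (u (n + 1))
  commute_of_not_adjacent : ∀ i j, j ≠ i + 1 → i ≠ j + 1 → Commute (u i) (u j)

def skewFactor {K : Type*} [Field K] (ω : K) (d : ZMod 5) : K :=
  if d = 1 then ω else if d = -1 then ω⁻¹ else 1

namespace PeriodicSkewRelations

variable {K A : Type*} [Field K] [Ring A] [Algebra K A] {ω : K} {u : ZMod 5 → A}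
  (h : PeriodicSkewRelations ω u)
include h

theorem skewCommute (hω : ω ≠ 0) (j k : ZMod 5) :
    SkewCommute (skewFactor ω (k - j)) (u j) (u k) := by
  unfold skewFactor
  split_ifs with hk hj
  · obtain rfl := eq_add_of_sub_eq' hk
    exact h.skewCommute_succ j
  · obtain rfl : j = k + 1 := by linear_combination -hj
    exact (h.skewCommute_succ k).symm (inv_mul_cancel₀ hω)
  · refine (h.commute_of_not_adjacent j k ?_ ?_).skewCommute_one
    · rintro rfl; exact hk (add_sub_cancel_left j 1)
    · rintro rfl; exact hj (by ring)

theorem commute_prod (hω : ω ≠ 0) (k : ZMod 5) :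
    Commute (u 4 * u 3 * u 2 * u 1 * u 0) (u k) := by
  have hk := ((((h.skewCommute hω k 4).mul_right (h.skewCommute hω k 3)).mul_right
    (h.skewCommute hω k 2)).mul_right (h.skewCommute hω k 1)).mul_right (h.skewCommute hω k 0)
  have hfactor : skewFactor ω (4 - k) * skewFactor ω (3 - k) * skewFactor ω (2 - k) *
      skewFactor ω (1 - k) * skewFactor ω (0 - k) = 1 := by
    fin_cases k <;> simp +decide [skewFactor, hω]
  rw [hfactor] at hk
  exact hk.commute.symm

theorem sq_sum :
    (∑ k, u k) ^ 2 = ∑ k, (u k ^ 2 + u k * u (k + 1) + u (k + 1) * u k)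
      + 2 • ∑ k, u k * u (k + 2) := by
  have h3 : ∑ k, u k * u (k + 3) = ∑ k, u k * u (k + 2) := by
    rw [← ZMod.sum_add_right _ 2]
    refine sum_congr rfl fun k _ => ?_
    rw [show k + 2 + 3 = k by grind]
    exact (h.commute_of_not_adjacent _ _ (by grind) (by grind)).eq.symm
  have h4 : ∑ k, u k * u (k + 4) = ∑ k, u (k + 1) * u k := by
    rw [← ZMod.sum_add_right _ 1]
    simp only [show ∀ k : ZMod 5, k + 1 + 4 = k by grind]
  have hexpand : (∑ k, u k) ^ 2 = ∑ i, ∑ k, u k * u (k + i) := by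
    have hshift (k : ZMod 5) : ∑ j, u k * u j = ∑ i, u k * u (k + i) :=
      (Equiv.sum_comp (Equiv.addLeft k) _).symm
    rw [sq, sum_mul_sum, sum_congr rfl fun k _ => hshift k, sum_comm]
  rw [hexpand, ZMod.sum_univ_five, h3, h4]
  simp only [add_zero, ← sq, sum_add_distrib, two_nsmul]
  abel

theorem mul_sum_sub_sum_mul (hω : ω ≠ 0) (j : ZMod 5) :
    u j * ∑ k, u k * u (k + 2) - (∑ k, u k * u (k + 2)) * u j =
      (ω - 1) • (u (j + 1) * u (j + 3) * u j) + (ω⁻¹ - 1) • (u (j + 2) * u (j + 4) * u j) := by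
  have hterm (i : ZMod 5) : u j * (u (j + i) * u (j + i + 2)) - u (j + i) * u (j + i + 2) * u j =
      (skewFactor ω i * skewFactor ω (i + 2) - 1) • (u (j + i) * u (j + i + 2) * u j) := by
    have := ((h.skewCommute hω j (j + i)).mul_right (h.skewCommute hω j (j + i + 2))).mul_sub_mul
    rwa [show j + i - j = i by ring, show j + i + 2 - j = i + 2 by ring] at this
  rw [← Equiv.sum_comp (Equiv.addLeft j), mul_sum, sum_mul, ← sum_sub_distrib]
  simp only [Equiv.coe_addLeft, hterm, ZMod.sum_univ_five]
  rw [show j + 1 + 2 = j + 3 by ring, show j + 2 + 2 = j + 4 by ring]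
  simp +decide [skewFactor, hω]

theorem sum_mul_mul_eq_smul_sum_mul_mul :
    ∑ j, u (j + 2) * u (j + 4) * u j = ω • ∑ j, u (j + 1) * u (j + 3) * u j := by
  rw [← ZMod.sum_add_right _ 1, smul_sum]
  refine sum_congr rfl fun a _ => ?_
  rw [show a + 1 + 2 = a + 3 by ring, show a + 1 + 4 = a by grind]
  have c0 : Commute (u (a + 3)) (u a) := h.commute_of_not_adjacent _ _ (by grind) (by grind)
  have c1 : Commute (u (a + 3)) (u (a + 1)) := h.commute_of_not_adjacent _ _ (by grind) (by grind)
  calc u (a + 3) * u a * u (a + 1) = u a * u (a + 1) * u (a + 3) := by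
        rw [mul_assoc, (c0.mul_right c1).eq]
    _ = ω • (u (a + 1) * u a * u (a + 3)) := by rw [h.skewCommute_succ a, smul_mul_assoc]
    _ = ω • (u (a + 1) * u (a + 3) * u a) := by rw [mul_assoc, ← c0.eq, mul_assoc]

theorem commute_sum_sum_mul_add_two (hω : ω ≠ 0) :
    Commute (∑ j, u j) (∑ k, u k * u (k + 2)) := by
  refine sub_eq_zero.mp ?_
  rw [sum_mul univ u, mul_sum univ u, ← sum_sub_distrib]
  simp only [h.mul_sum_sub_sum_mul hω]
  rw [sum_add_distrib, ← smul_sum, ← smul_sum, h.sum_mul_mul_eq_smul_sum_mul_mul, smul_smul,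
    ← add_smul, show ω - 1 + (ω⁻¹ - 1) * ω = 0 by rw [sub_mul, inv_mul_cancel₀ hω]; ring, zero_smul]

theorem commute_hamiltonians (hω : ω ≠ 0) :
    Commute (∑ k, u k) (∑ k, (u k ^ 2 + u k * u (k + 1) + u (k + 1) * u k)) := by
  rw [eq_sub_of_add_eq h.sq_sum.symm]
  exact (Commute.self_pow _ 2).sub_right ((h.commute_sum_sum_mul_add_two hω).smul_right 2)

end PeriodicSkewRelations

theorem TwoSidedIdeal.mkₐ_ringCon_eq_iff {R A : Type*} [CommSemiring R] [Ring A] [Algebra R A]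
    (I : TwoSidedIdeal A) {x y : A} : I.ringCon.mkₐ R x = I.ringCon.mkₐ R y ↔ x - y ∈ I :=
  I.ringCon.eq.trans (I.rel_iff x y)

theorem periodicSkewRelations_mkₐ_v5 (ω : ℂ) (I : TwoSidedIdeal A5)
    (hI : I = TwoSidedIdeal.span
      ({x | ∃ n : ZMod 5, x = v5 n * v5 (n + 1) - ω • (v5 (n + 1) * v5 n)} ∪
       {x | ∃ i j : ZMod 5, j ≠ i + 1 ∧ i ≠ j + 1 ∧ i ≠ j ∧ x = v5 i * v5 j - v5 j * v5 i})) :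
    PeriodicSkewRelations ω (fun n => I.ringCon.mkₐ ℂ (v5 n)) where
  skewCommute_succ n := by
    rw [SkewCommute, ← map_mul, ← map_mul, ← map_smul, TwoSidedIdeal.mkₐ_ringCon_eq_iff, hI]
    exact TwoSidedIdeal.subset_span (Or.inl ⟨n, rfl⟩)
  commute_of_not_adjacent i j hij hji := by
    obtain rfl | hne := eq_or_ne i j
    · exact Commute.refl _
    rw [Commute, SemiconjBy, ← map_mul, ← map_mul, TwoSidedIdeal.mkₐ_ringCon_eq_iff, hI]
    exact TwoSidedIdeal.subset_span (Or.inr ⟨i, j, hij, hji, hne, rfl⟩)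

/-- in `A₅/I`, the element `𝓗 = u₅u₄u₃u₂u₁` is central and the Hamiltonians
`H₁ = Σ u_k`, `H₂ = Σ (u_k² + u_k u_{k+1} + u_{k+1} u_k)` commute. -/
theorem periodic5_integrals
    (ω : ℂ) (hω : ω ≠ 0)
    (I : TwoSidedIdeal A5)
    (hI : I = TwoSidedIdeal.span
      ({x | ∃ n : ZMod 5, x = v5 n * v5 (n + 1) - ω • (v5 (n + 1) * v5 n)} ∪
       {x | ∃ i j : ZMod 5, j ≠ i + 1 ∧ i ≠ j + 1 ∧ i ≠ j ∧ x = v5 i * v5 j - v5 j * v5 i}))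
    (H₁ H₂ : A5)
    (hH₁ : H₁ = ∑ k : ZMod 5, v5 k)
    (hH₂ : H₂ = ∑ k : ZMod 5, (v5 k ^ 2 + v5 k * v5 (k + 1) + v5 (k + 1) * v5 k)) :
    (∀ k : ZMod 5,
      (v5 4 * v5 3 * v5 2 * v5 1 * v5 0) * v5 k
        - v5 k * (v5 4 * v5 3 * v5 2 * v5 1 * v5 0) ∈ I) ∧
    H₁ * H₂ - H₂ * H₁ ∈ I := by
  have hu := periodicSkewRelations_mkₐ_v5 ω I hI
  refine ⟨fun k => ?_, ?_⟩
  · rw [← TwoSidedIdeal.mkₐ_ringCon_eq_iff (R := ℂ)]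
    simpa only [map_mul] using (hu.commute_prod hω k).eq
  · rw [← TwoSidedIdeal.mkₐ_ringCon_eq_iff (R := ℂ), hH₁, hH₂]
    simpa only [map_mul, map_sum, map_add, map_pow] using (hu.commute_hamiltonians hω).eq
end
end
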